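/- Let G be a Fischer space of symplectic type and ℓ a line of G. Then every point p ∉ ℓ is collinear with either 0 or exactly 2 points of ℓ. -/

import Mathlib

/-- A partial triple system, given by a collinearity relation `col` and a map `third`
sending two distinct collinear points to the third point on their line. -/
structure IsPTS {P : Type*} (col : P → P → Prop) (third : P → P → P) : Prop where
  symm : ∀ x y, col x y → col y x
  irrefl : ∀ x, ¬ col x x
  third_symm : ∀ x y, col x y → third x y = third y x
  col_third : ∀ x y, col x y → col x (third x y)
  third_ne_left : ∀ x y, col x y → third x y ≠ x
  third_ne_right : ∀ x y, col x y → third x y ≠ y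
  third_third : ∀ x y, col x y → third x (third x y) = y
  unique_line : ∀ x y u v, col x y → col u v →
    x ∈ ({u, v, third u v} : Set P) → y ∈ ({u, v, third u v} : Set P) →
    ({x, y, third x y} : Set P) = {u, v, third u v}

/-- A subspace of a partial triple system: a set of points closed under taking
the third point of a line through two of its points. -/
def IsSubspace {P : Type*} (col : P → P → Prop) (third : P → P → P) (S : Set P) : Prop :=
  ∀ x ∈ S, ∀ y ∈ S, col x y → third x y ∈ S

/-- The subspace generated by a set of points. -/
def fclosure {P : Type*} (col : P → P → Prop) (third : P → P → P) (T : Set P) : Set P :=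
  ⋂₀ {S | T ⊆ S ∧ IsSubspace col third S}

/-- The line through two distinct collinear points, as a set. -/
def lineSet {P : Type*} (third : P → P → P) (x y : P) : Set P := {x, y, third x y}

/-- The six points of the complete quadrilateral (dual affine plane of order 2). -/
inductive CQPt | A | B | C | X | Y | Z
deriving DecidableEq

/-- The "opposite point" involution of the complete quadrilateral. -/
def CQPt.opp : CQPt → CQPt
  | .A => .X | .X => .A | .B => .Y | .Y => .B | .C => .Z | .Z => .C

/-- Collinearity in the complete quadrilateral with lines
{A,B,C}, {A,Y,Z}, {B,X,Z}, {C,X,Y}: two points are collinear iff they are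
distinct and not opposite. -/
def CQPt.col (p q : CQPt) : Prop := p ≠ q ∧ q ≠ p.opp

/-- The third point on the line through two distinct collinear points of the
complete quadrilateral. -/
def CQPt.third : CQPt → CQPt → CQPt
  | .A, .B => .C | .B, .A => .C | .A, .C => .B | .C, .A => .B | .B, .C => .A | .C, .B => .A
  | .A, .Y => .Z | .Y, .A => .Z | .A, .Z => .Y | .Z, .A => .Y | .Y, .Z => .A | .Z, .Y => .A
  | .B, .X => .Z | .X, .B => .Z | .B, .Z => .X | .Z, .B => .X | .X, .Z => .B | .Z, .X => .B
  | .C, .X => .Y | .X, .C => .Y | .C, .Y => .X | .Y, .C => .X | .X, .Y => .C | .Y, .X => .C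
  | p, _ => p

/-- A set of points is a complete quadrilateral if it is the isomorphic image of
the standard one (preserving collinearity and the `third` operation). -/
def IsCQSet {P : Type*} (col : P → P → Prop) (third : P → P → P) (S : Set P) : Prop :=
  ∃ f : CQPt → P, Function.Injective f ∧ Set.range f = S ∧
    (∀ u v, col (f u) (f v) ↔ CQPt.col u v) ∧
    (∀ u v, CQPt.col u v → f (CQPt.third u v) = third (f u) (f v))

/-- A set of points is an affine plane of order 3 if it is the isomorphic image of
`AG(2,3)` (any two distinct points collinear, third point `-(u+v)`). -/
def IsAPSet {P : Type*} (col : P → P → Prop) (third : P → P → P) (S : Set P) : Prop :=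
  ∃ f : ZMod 3 × ZMod 3 → P, Function.Injective f ∧ Set.range f = S ∧
    (∀ u v, col (f u) (f v) ↔ u ≠ v) ∧
    (∀ u v, u ≠ v → f (-(u + v)) = third (f u) (f v))

/-- A Fischer space: a partial triple system in which the subspace generated by two
distinct intersecting lines is a complete quadrilateral or an affine plane of order 3. -/
structure IsFischer {P : Type*} (col : P → P → Prop) (third : P → P → P)
    extends IsPTS col third : Prop where
  dichotomy : ∀ x y u v, col x y → col u v →
    lineSet third x y ≠ lineSet third u v →
    (lineSet third x y ∩ lineSet third u v).Nonempty →
    IsCQSet col third (fclosure col third (lineSet third x y ∪ lineSet third u v)) ∨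
    IsAPSet col third (fclosure col third (lineSet third x y ∪ lineSet third u v))

/-- A Fischer space of symplectic type: the subspace generated by two distinct
intersecting lines is always a complete quadrilateral. -/
structure IsSymplectic {P : Type*} (col : P → P → Prop) (third : P → P → P)
    extends IsPTS col third : Prop where
  cq : ∀ x y u v, col x y → col u v →
    lineSet third x y ≠ lineSet third u v →
    (lineSet third x y ∩ lineSet third u v).Nonempty →
    IsCQSet col third (fclosure col third (lineSet third x y ∪ lineSet third u v))

/-! If `p` is collinear with some point `q` of `ℓ`, the lines `pq` and `ℓ` generate a complete
quadrilateral, and in the complete quadrilateral every point off a line is collinear with exactly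
two of its points. -/

instance : Fintype CQPt :=
  ⟨{.A, .B, .C, .X, .Y, .Z}, fun p => by cases p <;> decide⟩

instance : DecidableRel CQPt.col := fun _ _ => inferInstanceAs (Decidable (_ ∧ _))

def ExactlyTwo (a b c : Prop) : Prop :=
  (a ∧ b ∧ ¬ c) ∨ (a ∧ ¬ b ∧ c) ∨ (¬ a ∧ b ∧ c)

lemma CQPt.exactlyTwo_col_of_not_mem_line (u v w : CQPt) (huv : u.col v)
    (hwu : w ≠ u) (hwv : w ≠ v) (hw : w ≠ u.third v) :
    ExactlyTwo (w.col u) (w.col v) (w.col (u.third v)) := by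
  unfold ExactlyTwo
  revert u v w
  decide

lemma subset_fclosure {P : Type*} (col : P → P → Prop) (third : P → P → P) (T : Set P) :
    T ⊆ fclosure col third T :=
  fun _ ha => Set.mem_sInter.mpr fun _ hS => hS.1 ha

lemma IsCQSet.exactlyTwo_col {P : Type*} {col : P → P → Prop} {third : P → P → P} {S : Set P}
    (hS : IsCQSet col third S) {x y p : P} (hxy : col x y) (hx : x ∈ S) (hy : y ∈ S)
    (hp : p ∈ S) (hpx : p ≠ x) (hpy : p ≠ y) (hpz : p ≠ third x y) :
    ExactlyTwo (col p x) (col p y) (col p (third x y)) := by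
  obtain ⟨f, -, rfl, hcol, hthird⟩ := hS
  obtain ⟨u, rfl⟩ := hx
  obtain ⟨v, rfl⟩ := hy
  obtain ⟨w, rfl⟩ := hp
  have huv : u.col v := (hcol u v).mp hxy
  rw [← hthird u v huv] at hpz ⊢
  simp only [hcol]
  exact CQPt.exactlyTwo_col_of_not_mem_line u v w huv (ne_of_apply_ne f hpx)
    (ne_of_apply_ne f hpy) (ne_of_apply_ne f hpz)

lemma IsSymplectic.exactlyTwo_col_of_col_mem_line {P : Type*} {col : P → P → Prop}
    {third : P → P → P} (hS : IsSymplectic col third) {x y p q : P} (hxy : col x y)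
    (hp : p ∉ lineSet third x y) (hq : q ∈ lineSet third x y) (hpq : col p q) :
    ExactlyTwo (col p x) (col p y) (col p (third x y)) := by
  have hne : lineSet third p q ≠ lineSet third x y := fun h =>
    hp (h ▸ by simp [lineSet])
  have hcq := hS.cq p q x y hpq hxy hne ⟨q, by simp [lineSet], hq⟩
  have hsub := subset_fclosure col third (lineSet third p q ∪ lineSet third x y)
  simp only [lineSet, Set.mem_insert_iff, Set.mem_singleton_iff, not_or] at hp
  exact hcq.exactlyTwo_col hxy (hsub (by simp [lineSet])) (hsub (by simp [lineSet]))
    (hsub (by simp [lineSet])) hp.1 hp.2.1 hp.2.2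

/-- In a Fischer space of symplectic type, every point `p` not on a line
ℓ = {x, y, x∧y} is collinear with either 0 or exactly 2 of its points. -/
theorem stmt14 {P : Type*} (col : P → P → Prop) (third : P → P → P)
    (hS : IsSymplectic col third)
    (x y : P) (hxy : col x y) (p : P) (hp : p ∉ lineSet third x y) :
    (¬ col p x ∧ ¬ col p y ∧ ¬ col p (third x y)) ∨
      (col p x ∧ col p y ∧ ¬ col p (third x y)) ∨
      (col p x ∧ ¬ col p y ∧ col p (third x y)) ∨
      (¬ col p x ∧ col p y ∧ col p (third x y)) := by
  by_cases hx : col p x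
  · exact .inr (hS.exactlyTwo_col_of_col_mem_line hxy hp (by simp [lineSet]) hx)
  by_cases hy : col p y
  · exact .inr (hS.exactlyTwo_col_of_col_mem_line hxy hp (by simp [lineSet]) hy)
  by_cases hz : col p (third x y)
  · exact .inr (hS.exactlyTwo_col_of_col_mem_line hxy hp (by simp [lineSet]) hz)
  exact .inl ⟨hx, hy, hz⟩
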